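/- arXiv:1404.0229 — 3 statements merged into one kernel-verified Lean document; each statement's English description precedes it below -/
import Mathlib

section
/- Let N be a real random variable with cdf F and U an independent uniform (0,1) random variable. Then the random variable Y = (1−U)F(N⁻) + U F(N) is uniformly distributed on (0,1), where F(N⁻) is the left limit of F at N. -/
/-! For `t ∈ (0, 1)` let `q = sup {x | F x ≤ t}`; right continuity gives `F(q⁻) ≤ t ≤ F q`.
As `Y` is a convex combination of `F(N⁻)` and `F N`, almost surely
`{Y ≤ t} = {N < q} ∪ {N = q, U (F q - F(q⁻)) ≤ t - F(q⁻)}`, and by independence this event has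
probability `F(q⁻) + (t - F(q⁻)) = t`. -/

open MeasureTheory Set Filter ProbabilityTheory Topology Function

lemma restrict_Ioo_zero_one_Iic (c : ℝ) :
    volume.restrict (Ioo (0:ℝ) 1) (Iic c) = ENNReal.ofReal (min 1 c) := by
  rw [Measure.restrict_congr_set Ioo_ae_eq_Icc, Measure.restrict_apply measurableSet_Iic,
    show Iic c ∩ Icc 0 1 = Icc 0 (min 1 c) by ext; simp; tauto, Real.volume_Icc, sub_zero]

lemma eq_restrict_Ioo_zero_one_of_measure_Iic {ν : Measure ℝ} [IsProbabilityMeasure ν]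
    (h : ∀ t ∈ Ioo (0:ℝ) 1, ν (Iic t) = ENNReal.ofReal t) :
    ν = volume.restrict (Ioo 0 1) := by
  have hlim (a : ℝ) (l : Filter ℝ) (hl : l ≤ 𝓝 a) : Tendsto ENNReal.ofReal l (𝓝 (.ofReal a)) :=
    (ENNReal.continuous_ofReal.tendsto a).mono_left hl
  refine Measure.ext_of_Iic _ _ fun t => ?_
  rw [restrict_Ioo_zero_one_Iic]
  rcases le_or_gt t 0 with ht0 | ht0
  · rw [min_eq_right (ht0.trans zero_le_one), ENNReal.ofReal_of_nonpos ht0]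
    refine le_antisymm (ENNReal.ofReal_zero ▸ ge_of_tendsto (hlim 0 (𝓝[>] 0) nhdsWithin_le_nhds) ?_)
      zero_le
    filter_upwards [Ioo_mem_nhdsGT zero_lt_one] with s hs
    exact h s hs ▸ measure_mono (Iic_subset_Iic.2 (ht0.trans hs.1.le))
  rcases lt_or_ge t 1 with ht1 | ht1
  · rw [min_eq_right ht1.le, h t ⟨ht0, ht1⟩]
  · rw [min_eq_left ht1, ENNReal.ofReal_one]
    refine le_antisymm prob_le_one
      (ENNReal.ofReal_one ▸ le_of_tendsto (hlim 1 (𝓝[<] 1) nhdsWithin_le_nhds) ?_)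
    filter_upwards [Ioo_mem_nhdsLT zero_lt_one] with s hs
    exact h s hs ▸ measure_mono (Iic_subset_Iic.2 (hs.2.le.trans ht1))

/-- Written with the factor `Δ` instead of the probability `s / Δ`, so that it also covers the
case `Δ = 0` of a point that is not an atom. -/
lemma ofReal_mul_restrict_Ioo_zero_one_mul_le {Δ s : ℝ} (hs : 0 ≤ s) (hsΔ : s ≤ Δ) :
    ENNReal.ofReal Δ * volume.restrict (Ioo (0:ℝ) 1) {u | u * Δ ≤ s} = ENNReal.ofReal s := by
  rcases (hs.trans hsΔ).eq_or_lt with rfl | hΔ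
  · rw [le_antisymm hsΔ hs, ENNReal.ofReal_zero, zero_mul]
  have : {u | u * Δ ≤ s} = Iic (s / Δ) := by ext u; simp [le_div_iff₀ hΔ]
  rw [this, restrict_Ioo_zero_one_Iic, min_eq_right ((div_le_one hΔ).2 hsΔ),
    ← ENNReal.ofReal_mul hΔ.le, mul_div_cancel₀ _ hΔ.ne']

lemma Monotone.exists_forall_lt_le_forall_gt_lt {f : ℝ → ℝ} (hf : Monotone f) {t : ℝ}
    (hlow : ∃ x, f x ≤ t) (hhigh : ∃ x, t < f x) :
    ∃ q, (∀ x < q, f x ≤ t) ∧ ∀ x, q < x → t < f x := by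
  obtain ⟨x₀, hx₀⟩ := hhigh
  have hbdd : BddAbove {x | f x ≤ t} :=
    ⟨x₀, fun x hx => le_of_not_gt fun hlt => (hx.trans_lt hx₀).not_ge (hf hlt.le)⟩
  refine ⟨sSup {x | f x ≤ t}, fun x hx => ?_, fun x hx => lt_of_not_ge fun hxt => ?_⟩
  · obtain ⟨y, hy, hxy⟩ := exists_lt_of_lt_csSup hlow hx
    exact (hf hxy.le).trans hy
  · exact hx.not_ge (le_csSup hbdd hxt)

lemma StieltjesFunction.leftLim_le_and_le_of_forall {f : StieltjesFunction ℝ} {q t : ℝ}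
    (hlt : ∀ x < q, f x ≤ t) (hgt : ∀ x, q < x → t < f x) :
    leftLim f q ≤ t ∧ t ≤ f q := by
  refine ⟨le_of_tendsto (f.mono.tendsto_leftLim q) ?_, ge_of_tendsto (x := 𝓝[>] q) (f := f) ?_ ?_⟩
  · filter_upwards [self_mem_nhdsWithin] with x hx using hlt x hx
  · exact (f.right_continuous q).tendsto.mono_left (nhdsWithin_mono _ Ioi_subset_Ici_self)
  · filter_upwards [self_mem_nhdsWithin] with x hx using (hgt x hx).le

lemma Monotone.one_sub_mul_leftLim_add_mul_le_iff {f : ℝ → ℝ} (hf : Monotone f) {q t u x : ℝ}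
    (hlt : ∀ x < q, f x ≤ t) (hgt : ∀ x, q < x → t < f x) (hu : u ∈ Icc (0:ℝ) 1) :
    (1 - u) * leftLim f x + u * f x ≤ t ↔
      x < q ∨ x = q ∧ u * (f q - leftLim f q) ≤ t - leftLim f q := by
  have hcomb : (1 - u) * leftLim f x + u * f x = leftLim f x + u * (f x - leftLim f x) := by ring
  have hjump : 0 ≤ f x - leftLim f x := sub_nonneg.2 (hf.leftLim_le le_rfl)
  rcases lt_trichotomy x q with hxq | rfl | hqx
  · have : u * (f x - leftLim f x) ≤ f x - leftLim f x := mul_le_of_le_one_left hjump hu.2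
    simp only [hxq, true_or, iff_true]
    linarith [hlt x hxq]
  · simp only [lt_irrefl, true_and, false_or, hcomb, le_sub_iff_add_le']
  · obtain ⟨y, hqy, hyx⟩ := exists_between hqx
    have : t < leftLim f x := (hgt y hqy).trans_le (hf.le_leftLim hyx)
    simp only [hqx.not_gt, hqx.ne', false_and, or_false, iff_false, not_le]
    nlinarith [hu.1]

lemma ofReal_leftLim_cdf (μ : Measure ℝ) [IsProbabilityMeasure μ] (x : ℝ) :
    ENNReal.ofReal (leftLim (cdf μ) x) = μ (Iio x) := by
  simpa [measure_cdf] using ((cdf μ).measure_Iio (tendsto_cdf_atBot μ) x).symm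

lemma leftLim_cdf_nonneg (μ : Measure ℝ) (x : ℝ) : 0 ≤ leftLim (cdf μ) x :=
  (cdf_nonneg μ (x - 1)).trans ((monotone_cdf μ).le_leftLim (sub_one_lt x))

noncomputable def randomizedCdf (μ : Measure ℝ) (x u : ℝ) : ℝ :=
  (1 - u) * leftLim (cdf μ) x + u * cdf μ x

lemma measurable_randomizedCdf (μ : Measure ℝ) : Measurable (uncurry (randomizedCdf μ)) := by
  have := (monotone_cdf μ).measurable
  have := (monotone_cdf μ).leftLim.measurable
  unfold randomizedCdf
  fun_prop

lemma measure_randomizedCdf_le {Ω : Type*} [MeasurableSpace Ω] {P : Measure Ω}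
    [IsProbabilityMeasure P] {N U : Ω → ℝ} (hNm : Measurable N) (hUm : Measurable U)
    (hindep : IndepFun N U P) (hU : P.map U = volume.restrict (Ioo 0 1)) {t : ℝ}
    (ht : t ∈ Ioo (0:ℝ) 1) :
    P {ω | randomizedCdf (P.map N) (N ω) (U ω) ≤ t} = ENNReal.ofReal t := by
  have := Measure.isProbabilityMeasure_map (μ := P) hNm.aemeasurable
  set F := cdf (P.map N)
  obtain ⟨q, hlt, hgt⟩ := F.mono.exists_forall_lt_le_forall_gt_lt
    (((tendsto_cdf_atBot _).eventually (gt_mem_nhds ht.1)).exists.imp fun _ => le_of_lt)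
    ((tendsto_cdf_atTop _).eventually (lt_mem_nhds ht.2)).exists
  obtain ⟨hleft, hright⟩ := F.leftLim_le_and_le_of_forall hlt hgt
  set A := {u : ℝ | u * (F q - leftLim F q) ≤ t - leftLim F q}
  have hA : MeasurableSet A := measurableSet_le (by fun_prop) measurable_const
  have hUunit : ∀ᵐ ω ∂P, U ω ∈ Icc (0:ℝ) 1 := by
    refine ae_of_ae_map hUm.aemeasurable ?_
    rw [hU]
    filter_upwards [ae_restrict_mem measurableSet_Ioo] with u hu using Ioo_subset_Icc_self hu
  have hset : {ω | randomizedCdf (P.map N) (N ω) (U ω) ≤ t} =ᵐ[P]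
      (N ⁻¹' Iio q ∪ (N ⁻¹' {q} ∩ U ⁻¹' A) : Set Ω) := by
    filter_upwards [hUunit] with ω hω
    exact propext (F.mono.one_sub_mul_leftLim_add_mul_le_iff hlt hgt hω)
  have hdisj : Disjoint (N ⁻¹' Iio q) (N ⁻¹' {q} ∩ U ⁻¹' A) :=
    disjoint_left.2 fun ω hlt heq => (hlt : N ω < q).ne heq.1
  calc P {ω | randomizedCdf (P.map N) (N ω) (U ω) ≤ t}
      = P (N ⁻¹' Iio q) + P (N ⁻¹' {q}) * P (U ⁻¹' A) := by
        rw [measure_congr hset, measure_union hdisj ((hNm (measurableSet_singleton q)).inter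
          (hUm hA)), hindep.measure_inter_preimage_eq_mul _ _ (measurableSet_singleton q) hA]
    _ = F.measure (Iio q) + F.measure {q} * volume.restrict (Ioo 0 1) A := by
        rw [measure_cdf, ← Measure.map_apply hNm measurableSet_Iio,
          ← Measure.map_apply hNm (measurableSet_singleton q), ← Measure.map_apply hUm hA, hU]
    _ = ENNReal.ofReal t := by
        rw [F.measure_Iio (tendsto_cdf_atBot _), F.measure_singleton, sub_zero,
          ofReal_mul_restrict_Ioo_zero_one_mul_le (sub_nonneg.2 hleft) (by linarith),
          ← ENNReal.ofReal_add (leftLim_cdf_nonneg _ q) (sub_nonneg.2 hleft), add_sub_cancel]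

/-- If `N` is a real random variable with cdf `F` (so `F x = P(N ≤ x)`
and the left limit is `F(x⁻) = P(N < x)`) and `U` is an independent `(0,1)`-uniform
random variable, then `Y = (1-U) F(N⁻) + U F(N)` is uniformly distributed on `(0,1)`. -/
theorem randomized_quantile_uniform
    {Ω : Type*} [MeasurableSpace Ω] (P : Measure Ω) [IsProbabilityMeasure P]
    (N U : Ω → ℝ) (hNm : Measurable N) (hUm : Measurable U)
    (hindep : IndepFun N U P)
    (hU : Measure.map U P = volume.restrict (Ioo (0:ℝ) 1))
    (F Fm : ℝ → ℝ)
    (hF : ∀ x, F x = (P {ω | N ω ≤ x}).toReal)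
    (hFm : ∀ x, Fm x = (P {ω | N ω < x}).toReal) :
    Measure.map (fun ω => (1 - U ω) * Fm (N ω) + U ω * F (N ω)) P
      = volume.restrict (Ioo (0:ℝ) 1) := by
  have := Measure.isProbabilityMeasure_map (μ := P) hNm.aemeasurable
  have hFcdf : F = cdf (P.map N) := funext fun x => by
    rw [hF, cdf_eq_real, measureReal_def, Measure.map_apply hNm measurableSet_Iic]
    rfl
  have hFmcdf : Fm = leftLim (cdf (P.map N)) := funext fun x => by
    rw [hFm, show {ω | N ω < x} = N ⁻¹' Iio x from rfl, ← Measure.map_apply hNm measurableSet_Iio,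
      ← ofReal_leftLim_cdf, ENNReal.toReal_ofReal (leftLim_cdf_nonneg _ x)]
  subst hFcdf hFmcdf
  change Measure.map (fun ω => randomizedCdf (P.map N) (N ω) (U ω)) P = _
  have hY : Measurable fun ω => randomizedCdf (P.map N) (N ω) (U ω) :=
    (measurable_randomizedCdf _).comp (hNm.prodMk hUm)
  have := Measure.isProbabilityMeasure_map (μ := P) hY.aemeasurable
  refine eq_restrict_Ioo_zero_one_of_measure_Iic fun t ht => ?_
  rw [Measure.map_apply hY measurableSet_Iic]
  exact measure_randomizedCdf_le hNm hUm hindep hU ht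
end

section
/- Let N⁰ and N¹ be integer-valued random variables with probability mass functions p⁰ > 0 and p¹ satisfying the monotone likelihood ratio property: p¹(x₁)/p⁰(x₁) ≥ p¹(x₀)/p⁰(x₀) whenever x₁ > x₀. Let F⁰ be the cdf of N⁰ and U ~ Uniform(0,1) independent of N¹. Then Y = (1−U)F⁰(N¹ − 1) + U F⁰(N¹) has a piecewise-linear cdf on [0,1] that is convex; its density at y ∈ (F⁰(x−1), F⁰(x)) equals p¹(x)/p⁰(x). -/
/-!
Given `N¹ = z`, the variable `Y = F⁰(z-1) + p⁰(z) U` is uniform on `(F⁰(z-1), F⁰(z)]`, so the law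
of `Y` has the step density equal to `p¹(z)/p⁰(z)` on that interval. These intervals tile `(0, 1)`
in increasing order of `z`, hence by the monotone likelihood ratio property the density is
nondecreasing on `(0, 1)`, and a cdf with a nondecreasing density is convex.
-/

open MeasureTheory Set ProbabilityTheory Function
open scoped ENNReal

section WithDensity

variable {α : Type*} [MeasurableSpace α] {μ : Measure α} {f : α → ℝ≥0∞} {s : Set α} {c : ℝ≥0∞}

lemma withDensity_apply_le_mul (hs : MeasurableSet s) (hf : ∀ x ∈ s, f x ≤ c) :
    μ.withDensity f s ≤ c * μ s := by
  rw [withDensity_apply f hs, ← setLIntegral_const]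
  exact setLIntegral_mono' hs hf

lemma mul_le_withDensity_apply (hs : MeasurableSet s) (hf : ∀ x ∈ s, c ≤ f x) :
    c * μ s ≤ μ.withDensity f s := by
  rw [withDensity_apply f hs, ← setLIntegral_const]
  exact setLIntegral_mono' hs hf

end WithDensity

section Cdf

variable {μ : Measure ℝ} [IsFiniteMeasure μ] {g : ℝ → ℝ≥0∞}

lemma measureReal_Iic_sub_measureReal_Iic {s t : ℝ} (hst : s ≤ t) :
    μ.real (Iic t) - μ.real (Iic s) = μ.real (Ioc s t) := by
  rw [← Iic_union_Ioc_eq_Iic hst, measureReal_union (Iic_disjoint_Ioc le_rfl) measurableSet_Ioc]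
  ring

theorem convexOn_measureReal_Iic_of_monotoneOn (hμ : μ = volume.withDensity g) {a b : ℝ}
    (hg : MonotoneOn g (Ioo a b)) : ConvexOn ℝ (Icc a b) fun y => μ.real (Iic y) := by
  refine convexOn_of_slope_mono_adjacent (convex_Icc a b) fun {x y z} hx hz hxy hyz => ?_
  have hy : y ∈ Ioo a b := ⟨hx.1.trans_lt hxy, hyz.trans_le hz.2⟩
  have hleft : μ (Ioc x y) ≤ g y * ENNReal.ofReal (y - x) := by
    rw [hμ, ← Real.volume_Ioc]
    exact withDensity_apply_le_mul measurableSet_Ioc fun u hu =>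
      hg ⟨hx.1.trans_lt hu.1, hu.2.trans_lt hy.2⟩ hy hu.2
  have hright : g y * ENNReal.ofReal (z - y) ≤ μ (Ioc y z) := by
    rw [hμ, ← Real.volume_Ioo]
    refine le_trans ?_ (measure_mono Ioo_subset_Ioc_self)
    exact mul_le_withDensity_apply measurableSet_Ioo fun u hu =>
      hg hy ⟨hy.1.trans hu.1, hu.2.trans_le hz.2⟩ hu.1.le
  have hslopes : μ (Ioc x y) * ENNReal.ofReal (z - y) ≤ μ (Ioc y z) * ENNReal.ofReal (y - x) :=
    calc μ (Ioc x y) * ENNReal.ofReal (z - y)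
        ≤ g y * ENNReal.ofReal (y - x) * ENNReal.ofReal (z - y) := by gcongr
      _ = g y * ENNReal.ofReal (z - y) * ENNReal.ofReal (y - x) := by ring
      _ ≤ μ (Ioc y z) * ENNReal.ofReal (y - x) := by gcongr
  have hslopes_real :=
    ENNReal.toReal_mono (ENNReal.mul_ne_top (measure_ne_top μ _) ENNReal.ofReal_ne_top) hslopes
  rw [ENNReal.toReal_mul, ENNReal.toReal_mul, ENNReal.toReal_ofReal (sub_nonneg.2 hxy.le),
    ENNReal.toReal_ofReal (sub_nonneg.2 hyz.le)] at hslopes_real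
  rw [measureReal_Iic_sub_measureReal_Iic hxy.le, measureReal_Iic_sub_measureReal_Iic hyz.le,
    div_le_div_iff₀ (sub_pos.2 hxy) (sub_pos.2 hyz)]
  exact hslopes_real

theorem measureReal_Iic_eq_add_of_eqOn (hμ : μ = volume.withDensity g) {a b c : ℝ}
    (hg : EqOn g (fun _ => ENNReal.ofReal c) (Ioc a b)) (hc : 0 ≤ c) {y : ℝ}
    (hy : y ∈ Icc a b) : μ.real (Iic y) = μ.real (Iic a) + c * (y - a) := by
  have hIoc : μ (Ioc a y) = ENNReal.ofReal c * volume (Ioc a y) := by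
    rw [hμ, withDensity_apply g measurableSet_Ioc, setLIntegral_congr_fun measurableSet_Ioc
      fun u hu => hg ⟨hu.1, hu.2.trans hy.2⟩, setLIntegral_const]
  rw [← sub_eq_iff_eq_add', measureReal_Iic_sub_measureReal_Iic hy.1, measureReal_def, hIoc,
    Real.volume_Ioc, ENNReal.toReal_mul, ENNReal.toReal_ofReal hc,
    ENNReal.toReal_ofReal (sub_nonneg.2 hy.1)]

end Cdf

noncomputable def stepDensity {ι : Type*} (I : ι → Set ℝ) (c : ι → ℝ≥0∞) (y : ℝ) : ℝ≥0∞ :=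
  ∑' i, (I i).indicator (fun _ => c i) y

lemma stepDensity_of_mem {ι : Type*} {I : ι → Set ℝ} (hI : Pairwise (Disjoint on I))
    (c : ι → ℝ≥0∞) {i : ι} {y : ℝ} (hy : y ∈ I i) : stepDensity I c y = c i := by
  rw [stepDensity, tsum_eq_single i fun j hj => indicator_of_notMem
    (disjoint_left.1 (hI hj.symm) hy) _, indicator_of_mem hy]

lemma volume_restrict_Ioc_preimage_add_mul (a : ℝ) {p : ℝ} (hp : 0 < p) (A : Set ℝ) :
    volume.restrict (Ioc 0 1) ((fun u => a + p * u) ⁻¹' A) =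
      ENNReal.ofReal p⁻¹ * volume (A ∩ Ioc a (a + p)) := by
  have hset : (fun u => a + p * u) ⁻¹' A ∩ Ioc 0 1 =
      (p * ·) ⁻¹' ((a + ·) ⁻¹' (A ∩ Ioc a (a + p))) := by
    ext u
    simp only [mem_inter_iff, mem_preimage, mem_Ioc]
    constructor
    · rintro ⟨hA, h0, h1⟩
      exact ⟨hA, by nlinarith, by nlinarith⟩
    · rintro ⟨hA, h0, h1⟩
      exact ⟨hA, pos_of_mul_pos_right (by linarith) hp.le,
        (mul_le_iff_le_one_right hp).1 (by linarith)⟩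
  rw [Measure.restrict_apply' measurableSet_Ioc, hset, Real.volume_preimage_mul_left hp.ne',
    measure_preimage_add, abs_of_pos (inv_pos.2 hp)]

theorem map_add_mul_eq_withDensity_stepDensity {α Ω : Type*} [MeasurableSpace α] [Countable α]
    [MeasurableSingletonClass α] [MeasurableSpace Ω] {P : Measure Ω} [IsProbabilityMeasure P]
    {N : Ω → α} {U : Ω → ℝ} (hN : Measurable N) (hU : Measurable U) (hNU : IndepFun N U P)
    (hUlaw : P.map U = volume.restrict (Ioc 0 1)) (a : α → ℝ) {p : α → ℝ} (hp : ∀ z, 0 < p z) :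
    P.map (fun ω => a (N ω) + p (N ω) * U ω) = volume.withDensity
      (stepDensity (fun z => Ioc (a z) (a z + p z))
        fun z => P (N ⁻¹' {z}) / ENNReal.ofReal (p z)) := by
  set φ : α × ℝ → ℝ := fun x => a x.1 + p x.1 * x.2
  have hφ : Measurable φ := measurable_from_prod_countable_right fun z => by fun_prop
  ext A hA
  rw [show (fun ω => a (N ω) + p (N ω) * U ω) = φ ∘ fun ω => (N ω, U ω) from rfl,
    ← Measure.map_map hφ (hN.prodMk hU), Measure.map_apply hφ hA,
    hNU.map_prod_eq_prod_map_map hN.aemeasurable hU.aemeasurable, hUlaw,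
    Measure.prod_apply (hφ hA), lintegral_countable', withDensity_apply _ hA]
  simp only [stepDensity]
  rw [lintegral_tsum fun z => aemeasurable_const.indicator measurableSet_Ioc]
  refine tsum_congr fun z => ?_
  rw [show Prod.mk z ⁻¹' (φ ⁻¹' A) = (fun u => a z + p z * u) ⁻¹' A from rfl,
    volume_restrict_Ioc_preimage_add_mul (a z) (hp z) A,
    Measure.map_apply hN (measurableSet_singleton z), lintegral_indicator_const measurableSet_Ioc,
    Measure.restrict_apply measurableSet_Ioc, inter_comm, ENNReal.ofReal_inv_of_pos (hp z),
    div_eq_mul_inv]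
  ring

section IntervalPartition

variable {β : Type*} [LinearOrder β] {F : ℤ → β}

lemma Monotone.le_of_mem_Ioc_sub_one (hF : Monotone F) {u v : β} {z w : ℤ}
    (hu : u ∈ Ioc (F (z - 1)) (F z)) (hv : v ∈ Ioc (F (w - 1)) (F w)) (huv : u ≤ v) :
    z ≤ w := by
  by_contra! hwz
  exact (hu.1.trans_le (huv.trans (hv.2.trans (hF (by omega : w ≤ z - 1))))).false

lemma Monotone.pairwise_disjoint_on_Ioc_sub_one (hF : Monotone F) :
    Pairwise (Disjoint on fun z => Ioc (F (z - 1)) (F z)) := fun _ _ hzw =>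
  disjoint_left.2 fun _ hu hv => hzw <|
    le_antisymm (hF.le_of_mem_Ioc_sub_one hu hv le_rfl) (hF.le_of_mem_Ioc_sub_one hv hu le_rfl)

lemma Monotone.exists_mem_Ioc_sub_one (hF : Monotone F) {u : β} (hlow : ∃ z, F z < u)
    (hhigh : ∃ z, u ≤ F z) : ∃ z, u ∈ Ioc (F (z - 1)) (F z) := by
  obtain ⟨z₀, hz₀⟩ := hlow
  have hbdd : ∀ z, u ≤ F z → z₀ ≤ z := fun z hz => by
    by_contra! h
    exact (hz₀.trans_le (hz.trans (hF h.le))).false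
  obtain ⟨z, hz, hleast⟩ := Int.exists_least_of_bdd ⟨z₀, hbdd⟩ hhigh
  exact ⟨z, lt_of_not_ge fun h => by linarith [hleast (z - 1) h], hz⟩

end IntervalPartition

lemma Monotone.monotoneOn_stepDensity {F : ℤ → ℝ} (hF : Monotone F) {c : ℤ → ℝ≥0∞}
    (hc : Monotone c) {S : Set ℝ} (hS : ∀ u ∈ S, ∃ z, u ∈ Ioc (F (z - 1)) (F z)) :
    MonotoneOn (stepDensity (fun z => Ioc (F (z - 1)) (F z)) c) S := by
  intro u hu v hv huv
  obtain ⟨z, hz⟩ := hS u hu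
  obtain ⟨w, hw⟩ := hS v hv
  rw [stepDensity_of_mem hF.pairwise_disjoint_on_Ioc_sub_one _ hz,
    stepDensity_of_mem hF.pairwise_disjoint_on_Ioc_sub_one _ hw]
  exact hc (hF.le_of_mem_Ioc_sub_one hz hw huv)

theorem mlr_discrete_convex_piecewise_linear_cdf_general
    {Ω : Type*} [MeasurableSpace Ω] (P : Measure Ω) [IsProbabilityMeasure P]
    (p0 p1 : ℤ → ℝ) (F0 : ℤ → ℝ)
    (hp0pos : ∀ x, 0 < p0 x)
    (hF0step : ∀ x : ℤ, F0 x = F0 (x - 1) + p0 x)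
    (hF0bot : Filter.Tendsto F0 Filter.atBot (nhds 0))
    (hF0top : Filter.Tendsto F0 Filter.atTop (nhds 1))
    (hMLR : ∀ x0 x1 : ℤ, x0 < x1 → p1 x0 / p0 x0 ≤ p1 x1 / p0 x1)
    (N1 : Ω → ℤ) (U : Ω → ℝ) (hN1m : Measurable N1) (hUm : Measurable U)
    (hindep : IndepFun N1 U P)
    (hU : Measure.map U P = volume.restrict (Ioo (0:ℝ) 1))
    (hp1 : ∀ x : ℤ, p1 x = (P {ω | N1 ω = x}).toReal)
    (G : ℝ → ℝ)
    (hG : ∀ y : ℝ, G y =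
      (P {ω | (1 - U ω) * F0 (N1 ω - 1) + U ω * F0 (N1 ω) ≤ y}).toReal) :
    ConvexOn ℝ (Icc (0:ℝ) 1) G ∧
      ∀ x : ℤ, ∀ y ∈ Icc (F0 (x - 1)) (F0 x),
        G y = G (F0 (x - 1)) + p1 x / p0 x * (y - F0 (x - 1)) := by
  have hF0 : Monotone F0 := monotone_int_of_le_succ fun z => by
    rw [hF0step (z + 1), add_sub_cancel_right]
    linarith [hp0pos (z + 1)]
  have hG' : G = fun y => (P.map fun ω => F0 (N1 ω - 1) + p0 (N1 ω) * U ω).real (Iic y) := by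
    ext y
    rw [hG, map_measureReal_apply (by fun_prop) measurableSet_Iic, measureReal_def]
    congr 2 with ω
    rw [mem_ofPred_eq, mem_preimage, mem_Iic, hF0step (N1 ω)]
    ring_nf
  have hratio : ∀ z, P (N1 ⁻¹' {z}) / ENNReal.ofReal (p0 z) = ENNReal.ofReal (p1 z / p0 z) :=
    fun z => by
      rw [ENNReal.ofReal_div_of_pos (hp0pos z), hp1 z, ENNReal.ofReal_toReal (measure_ne_top _ _)]
      rfl
  rw [Measure.restrict_congr_set Ioo_ae_eq_Ioc] at hU
  have hlaw :=
    map_add_mul_eq_withDensity_stepDensity hN1m hUm hindep hU (fun z => F0 (z - 1)) hp0pos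
  simp only [← hF0step, hratio] at hlaw
  have hcover : ∀ u ∈ Ioo (0 : ℝ) 1, ∃ z, u ∈ Ioc (F0 (z - 1)) (F0 z) := fun u hu =>
    hF0.exists_mem_Ioc_sub_one (hF0bot.eventually (gt_mem_nhds hu.1)).exists
      ((hF0top.eventually (lt_mem_nhds hu.2)).exists.imp fun _ => le_of_lt)
  have hMLR' : Monotone fun z => ENNReal.ofReal (p1 z / p0 z) := fun z w hzw =>
    ENNReal.ofReal_le_ofReal <| hzw.eq_or_lt.elim (fun h => h ▸ le_rfl) (hMLR z w)
  rw [hG']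
  exact ⟨convexOn_measureReal_Iic_of_monotoneOn hlaw (hF0.monotoneOn_stepDensity hMLR' hcover),
    fun x y hy => measureReal_Iic_eq_add_of_eqOn hlaw
      (fun u hu => stepDensity_of_mem hF0.pairwise_disjoint_on_Ioc_sub_one _ hu)
      (div_nonneg (hp1 x ▸ ENNReal.toReal_nonneg) (hp0pos x).le) hy⟩

/-- discrete MLR case: if `p⁰ > 0` and `p¹` are pmfs on `ℤ` with the
monotone likelihood ratio property, `F⁰` is the cdf associated with `p⁰`, `N¹` has pmf
`p¹`, and `U` is `(0,1)`-uniform and independent of `N¹`, then the cdf of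
`Y = (1-U) F⁰(N¹-1) + U F⁰(N¹)` is convex on `[0,1]` and is piecewise linear: on each
interval `[F⁰(x-1), F⁰(x)]` it is affine with slope `p¹(x)/p⁰(x)` (so the density at
`y ∈ (F⁰(x-1), F⁰(x))` equals `p¹(x)/p⁰(x)`). -/
theorem mlr_discrete_convex_piecewise_linear_cdf
    {Ω : Type*} [MeasurableSpace Ω] (P : Measure Ω) [IsProbabilityMeasure P]
    (p0 p1 : ℤ → ℝ) (F0 : ℤ → ℝ)
    (hp0pos : ∀ x, 0 < p0 x) (hp1nonneg : ∀ x, 0 ≤ p1 x)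
    (hF0step : ∀ x : ℤ, F0 x = F0 (x - 1) + p0 x)
    (hF0bot : Filter.Tendsto F0 Filter.atBot (nhds 0))
    (hF0top : Filter.Tendsto F0 Filter.atTop (nhds 1))
    (hMLR : ∀ x0 x1 : ℤ, x0 < x1 → p1 x0 / p0 x0 ≤ p1 x1 / p0 x1)
    (N1 : Ω → ℤ) (U : Ω → ℝ) (hN1m : Measurable N1) (hUm : Measurable U)
    (hindep : IndepFun N1 U P)
    (hU : Measure.map U P = volume.restrict (Ioo (0:ℝ) 1))
    (hp1 : ∀ x : ℤ, p1 x = (P {ω | N1 ω = x}).toReal)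
    (G : ℝ → ℝ)
    (hG : ∀ y : ℝ, G y =
      (P {ω | (1 - U ω) * F0 (N1 ω - 1) + U ω * F0 (N1 ω) ≤ y}).toReal) :
    ConvexOn ℝ (Icc (0:ℝ) 1) G ∧
      ∀ x : ℤ, ∀ y ∈ Icc (F0 (x - 1)) (F0 x),
        G y = G (F0 (x - 1)) + p1 x / p0 x * (y - F0 (x - 1)) :=
  mlr_discrete_convex_piecewise_linear_cdf_general P p0 p1 F0 hp0pos hF0step hF0bot hF0top hMLR N1 U
    hN1m hUm hindep hU hp1 G hG
end

section
/- For the discrete case above, P(Y ≤ y) = F¹(x − 1) + (p¹(x)/p⁰(x)) · (y − F⁰(x − 1)) for every y ∈ [F⁰(x−1), F⁰(x)], where x is the unique integer with F⁰(x−1) ≤ y ≤ F⁰(x) (assuming p⁰(x) > 0), and F¹ is the cdf of N¹. -/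
/-!
Writing `p⁰ = F⁰(n) - F⁰(n-1)`, the value `Y = F⁰(N¹-1) + U p⁰(N¹)` sweeps the interval
`[F⁰(N¹-1), F⁰(N¹)]` as `U` runs through `(0,1)`, and these intervals tile the range of `F⁰`.
So, almost surely, `Y ≤ y` holds exactly when `N¹ ≤ x - 1`, or `N¹ = x` and
`U ≤ (y - F⁰(x-1)) / p⁰(x)`. The two events are disjoint, and by independence and uniformity
of `U` the second has probability `p¹(x) (y - F⁰(x-1)) / p⁰(x)`.
-/

open MeasureTheory Set ProbabilityTheory

theorem strictMono_of_eq_sub_one_add {F p : ℤ → ℝ} (hp : ∀ n, 0 < p n)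
    (hF : ∀ n, F n = F (n - 1) + p n) : StrictMono F :=
  strictMono_int_of_lt_succ fun n => by
    have := hF (n + 1)
    rw [add_sub_cancel_right] at this
    linarith [hp (n + 1)]

theorem interpolate_le_iff_of_strictMono {F : ℤ → ℝ} (hF : StrictMono F) {x n : ℤ} {u y : ℝ}
    (hu : u ∈ Ioc 0 1) (hy : y ∈ Icc (F (x - 1)) (F x)) :
    (1 - u) * F (n - 1) + u * F n ≤ y ↔
      n ≤ x - 1 ∨ n = x ∧ u ≤ (y - F (x - 1)) / (F x - F (x - 1)) := by
  obtain ⟨hu0, hu1⟩ := hu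
  obtain ⟨hy0, hy1⟩ := hy
  have hstep : ∀ m, F (m - 1) < F m := fun m => hF (sub_one_lt m)
  rcases lt_trichotomy n x with hnx | rfl | hxn
  · have : F n ≤ F (x - 1) := hF.monotone (by omega)
    have : (1 - u) * F (n - 1) + u * F n ≤ F n := by nlinarith [hstep n]
    exact ⟨fun _ => Or.inl (by omega), fun _ => by linarith⟩
  · rw [le_div_iff₀ (sub_pos.2 (hstep n))]
    constructor
    · exact fun h => Or.inr ⟨rfl, by linarith⟩
    · rintro (h | ⟨-, h⟩)
      · omega
      · linarith
  · have : F x ≤ F (n - 1) := hF.monotone (by omega)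
    have : F (n - 1) < (1 - u) * F (n - 1) + u * F n := by nlinarith [hstep n]
    exact ⟨fun _ => by linarith, by omega⟩

section UniformOnUnitInterval

variable {Ω : Type*} [MeasurableSpace Ω] {P : Measure Ω} {U : Ω → ℝ}

theorem ae_mem_Ioo_of_map_eq_restrict (hUm : AEMeasurable U P)
    (hU : P.map U = volume.restrict (Ioo (0 : ℝ) 1)) : ∀ᵐ ω ∂P, U ω ∈ Ioo 0 1 :=
  ae_of_ae_map hUm (hU ▸ ae_restrict_mem measurableSet_Ioo)

theorem measure_preimage_Iic_of_map_eq_restrict (hUm : Measurable U)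
    (hU : P.map U = volume.restrict (Ioo (0 : ℝ) 1)) {t : ℝ} (ht : t ∈ Icc 0 1) :
    P (U ⁻¹' Iic t) = ENNReal.ofReal t := by
  rw [← Measure.map_apply hUm measurableSet_Iic, hU, Measure.restrict_apply measurableSet_Iic]
  refine le_antisymm ?_ ?_
  · calc volume (Iic t ∩ Ioo 0 1) ≤ volume (Icc 0 t) :=
          measure_mono fun u hu => ⟨hu.2.1.le, hu.1⟩
      _ = ENNReal.ofReal t := by rw [Real.volume_Icc, sub_zero]
  · calc ENNReal.ofReal t = volume (Ioo 0 t) := by rw [Real.volume_Ioo, sub_zero]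
      _ ≤ volume (Iic t ∩ Ioo 0 1) :=
          measure_mono fun u hu => ⟨hu.2.le, hu.1, hu.2.trans_le ht.2⟩

end UniformOnUnitInterval

theorem discrete_randomized_quantile_cdf_formula_general
    {Ω : Type*} [MeasurableSpace Ω] (P : Measure Ω) [IsProbabilityMeasure P]
    (p0 p1 : ℤ → ℝ) (F0 F1 : ℤ → ℝ)
    (hp0pos : ∀ x, 0 < p0 x)
    (hF0step : ∀ x : ℤ, F0 x = F0 (x - 1) + p0 x)
    (N1 : Ω → ℤ) (U : Ω → ℝ) (hN1m : Measurable N1) (hUm : Measurable U)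
    (hindep : IndepFun N1 U P)
    (hU : Measure.map U P = volume.restrict (Ioo (0:ℝ) 1))
    (hp1 : ∀ x : ℤ, p1 x = (P {ω | N1 ω = x}).toReal)
    (hF1 : ∀ x : ℤ, F1 x = (P {ω | N1 ω ≤ x}).toReal) :
    ∀ x : ℤ, ∀ y ∈ Icc (F0 (x - 1)) (F0 x),
      (P {ω | (1 - U ω) * F0 (N1 ω - 1) + U ω * F0 (N1 ω) ≤ y}).toReal
        = F1 (x - 1) + p1 x / p0 x * (y - F0 (x - 1)) := by
  intro x y hy
  have hp1x : p1 x = (P (N1 ⁻¹' {x})).toReal := hp1 x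
  have hp0x : p0 x = F0 x - F0 (x - 1) := by linarith [hF0step x]
  set t := (y - F0 (x - 1)) / (F0 x - F0 (x - 1)) with ht_def
  have ht : t ∈ Icc 0 1 :=
    ⟨div_nonneg (sub_nonneg.2 hy.1) (hp0x ▸ (hp0pos x).le),
      div_le_one_of_le₀ (sub_le_sub_right hy.2 _) (hp0x ▸ (hp0pos x).le)⟩
  have hevent : {ω | (1 - U ω) * F0 (N1 ω - 1) + U ω * F0 (N1 ω) ≤ y}
      =ᵐ[P] ({ω | N1 ω ≤ x - 1} ∪ N1 ⁻¹' {x} ∩ U ⁻¹' Iic t : Set Ω) := by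
    filter_upwards [ae_mem_Ioo_of_map_eq_restrict hUm.aemeasurable hU] with ω hω
    exact propext <| interpolate_le_iff_of_strictMono
      (strictMono_of_eq_sub_one_add hp0pos hF0step) (Ioo_subset_Ioc_self hω) hy
  have hdisj : Disjoint {ω | N1 ω ≤ x - 1} (N1 ⁻¹' {x} ∩ U ⁻¹' Iic t) :=
    disjoint_left.2 fun ω (h₁ : N1 ω ≤ x - 1) h₂ => by
      have : N1 ω = x := h₂.1
      omega
  rw [measure_congr hevent,
    measure_union hdisj ((hN1m (measurableSet_singleton x)).inter (hUm measurableSet_Iic)),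
    hindep.measure_inter_preimage_eq_mul _ _ (measurableSet_singleton x) measurableSet_Iic,
    measure_preimage_Iic_of_map_eq_restrict hUm hU ht,
    ENNReal.toReal_add (by finiteness) (by finiteness), ENNReal.toReal_mul,
    ENNReal.toReal_ofReal ht.1, hF1, hp1x, hp0x, ht_def]
  ring

/-- in the discrete randomized-quantile setting,
`P(Y ≤ y) = F¹(x-1) + (p¹(x)/p⁰(x)) (y - F⁰(x-1))` for every
`y ∈ [F⁰(x-1), F⁰(x)]`, where `F¹` is the cdf of `N¹`. -/
theorem discrete_randomized_quantile_cdf_formula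
    {Ω : Type*} [MeasurableSpace Ω] (P : Measure Ω) [IsProbabilityMeasure P]
    (p0 p1 : ℤ → ℝ) (F0 F1 : ℤ → ℝ)
    (hp0pos : ∀ x, 0 < p0 x) (hp1nonneg : ∀ x, 0 ≤ p1 x)
    (hF0step : ∀ x : ℤ, F0 x = F0 (x - 1) + p0 x)
    (hF0bot : Filter.Tendsto F0 Filter.atBot (nhds 0))
    (hF0top : Filter.Tendsto F0 Filter.atTop (nhds 1))
    (N1 : Ω → ℤ) (U : Ω → ℝ) (hN1m : Measurable N1) (hUm : Measurable U)
    (hindep : IndepFun N1 U P)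
    (hU : Measure.map U P = volume.restrict (Ioo (0:ℝ) 1))
    (hp1 : ∀ x : ℤ, p1 x = (P {ω | N1 ω = x}).toReal)
    (hF1 : ∀ x : ℤ, F1 x = (P {ω | N1 ω ≤ x}).toReal) :
    ∀ x : ℤ, ∀ y ∈ Icc (F0 (x - 1)) (F0 x),
      (P {ω | (1 - U ω) * F0 (N1 ω - 1) + U ω * F0 (N1 ω) ≤ y}).toReal
        = F1 (x - 1) + p1 x / p0 x * (y - F0 (x - 1)) :=
  discrete_randomized_quantile_cdf_formula_general P p0 p1 F0 F1 hp0pos hF0step N1 U hN1m hUm hindep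
    hU hp1 hF1
end
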